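/- Let $X$ be a hyperbolic space, $z\in X$, $R>0$ and $\varepsilon>0$. There exists a $(1+\varepsilon)$-Lipschitz mapping $\pi\colon X\to X$ such that $\pi(x)=z$ for all $x\in B(z,R)$, $\pi(x)=x$ for all $x\in X\setminus B(z,R(1+1/\varepsilon))$, and $\rho(\pi(x),x)\le R$ for all $x\in X$. -/
import Mathlib


/-- A hyperbolic metric space structure: a choice of convex combination
`W x y l = (1-l) x ⊕ l y` along distinguished geodesic segments. -/
structure HyperbolicW (X : Type*) [MetricSpace X] where
  W : X → X → ℝ → X
  dist_left : ∀ x y : X, ∀ l : ℝ, l ∈ Set.Icc (0:ℝ) 1 →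
    dist x (W x y l) = l * dist x y
  dist_right : ∀ x y : X, ∀ l : ℝ, l ∈ Set.Icc (0:ℝ) 1 →
    dist (W x y l) y = (1 - l) * dist x y
  hyp : ∀ x y z : X, ∀ l : ℝ, l ∈ Set.Icc (0:ℝ) 1 →
    dist (W x y l) (W x z l) ≤ l * dist y z
  subseg : ∀ x y : X, ∀ l μ : ℝ, μ ∈ Set.Icc (0:ℝ) 1 → l ∈ Set.Icc (0:ℝ) 1 →
    μ ≤ l → 0 < l → W x y μ = W x (W x y l) (μ / l)

/-- A mapping is nonexpansive if it is 1-Lipschitz. -/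
def Nonexp {X : Type*} [MetricSpace X] (f : X → X) : Prop :=
  ∀ x y : X, dist (f x) (f y) ≤ dist x y

/-- A metric space is unbounded. -/
def Unbdd (X : Type*) [MetricSpace X] : Prop :=
  ¬ Bornology.IsBounded (Set.univ : Set X)

/-- The radial profile function. -/
noncomputable def gfun (R ε t : ℝ) : ℝ := min t ((1 + ε) * max 0 (t - R))

lemma gfun_nonneg {R ε t : ℝ} (hε : 0 < ε) (ht : 0 ≤ t) : 0 ≤ gfun R ε t := by
  unfold gfun
  have h : 0 ≤ (1 + ε) * max 0 (t - R) :=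
    mul_nonneg (by linarith) (le_max_left _ _)
  exact le_min ht h

lemma gfun_le {R ε t : ℝ} : gfun R ε t ≤ t := min_le_left _ _

lemma gfun_ball {R ε t : ℝ} (ht : 0 ≤ t) (htR : t ≤ R) : gfun R ε t = 0 := by
  unfold gfun
  rw [max_eq_left (by linarith : t - R ≤ 0), mul_zero]
  exact min_eq_right ht

lemma gfun_lip {R ε a b : ℝ} (hε : 0 < ε) (hab : a ≤ b) :
    gfun R ε b ≤ gfun R ε a + (1 + ε) * (b - a) := by
  have h1 : b ≤ a + (1 + ε) * (b - a) := by nlinarith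
  have h2 : max 0 (b - R) ≤ max 0 (a - R) + (b - a) := by
    refine max_le (add_nonneg (le_max_left _ _) (by linarith)) ?_
    have : a - R ≤ max 0 (a - R) := le_max_right _ _
    linarith
  have h3 : (1 + ε) * max 0 (b - R) ≤ (1 + ε) * max 0 (a - R) + (1 + ε) * (b - a) := by
    nlinarith
  unfold gfun
  rcases le_total a ((1 + ε) * max 0 (a - R)) with h | h
  · calc min b ((1 + ε) * max 0 (b - R)) ≤ b := min_le_left _ _
      _ ≤ a + (1 + ε) * (b - a) := h1
      _ = min a ((1 + ε) * max 0 (a - R)) + (1 + ε) * (b - a) := by rw [min_eq_left h]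
  · calc min b ((1 + ε) * max 0 (b - R)) ≤ (1 + ε) * max 0 (b - R) := min_le_right _ _
      _ ≤ (1 + ε) * max 0 (a - R) + (1 + ε) * (b - a) := h3
      _ = min a ((1 + ε) * max 0 (a - R)) + (1 + ε) * (b - a) := by rw [min_eq_right h]

lemma gfun_mono_div {R ε a b : ℝ} (hR : 0 < R) (hε : 0 < ε) (ha : 0 < a) (hab : a ≤ b) :
    gfun R ε a / a ≤ gfun R ε b / b := by
  have hb : 0 < b := lt_of_lt_of_le ha hab
  rw [div_le_div_iff₀ ha hb]
  rcases le_total a R with h2 | h2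
  · rw [gfun_ball ha.le h2, zero_mul]
    exact mul_nonneg (gfun_nonneg hε hb.le) ha.le
  · have hma : max 0 (a - R) = a - R := max_eq_right (by linarith)
    have hmb : max 0 (b - R) = b - R := max_eq_right (by linarith)
    unfold gfun
    rw [hma, hmb]
    rcases le_total a ((1+ε) * (a - R)) with h | h <;>
      rcases le_total b ((1+ε) * (b - R)) with h' | h'
    · rw [min_eq_left h, min_eq_left h']; nlinarith
    · have hba2 : b ≤ a := by nlinarith
      have heq : a = b := le_antisymm hab hba2
      subst heq
      nlinarith
    · rw [min_eq_right h, min_eq_left h']; nlinarith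
    · rw [min_eq_right h, min_eq_right h']
      nlinarith [mul_le_mul_of_nonneg_left hab hR.le]

lemma seg_dist {X : Type*} [MetricSpace X] (H : HyperbolicW X) (x y : X) {μ l : ℝ}
    (h0 : 0 ≤ μ) (hml : μ ≤ l) (hl1 : l ≤ 1) :
    dist (H.W x y μ) (H.W x y l) = (l - μ) * dist x y := by
  rcases eq_or_lt_of_le (le_trans h0 hml) with hl | hl
  · have hμ : μ = 0 := le_antisymm (hl ▸ hml) h0
    rw [← hl, hμ, sub_zero, zero_mul, dist_self]
  · have hsub := H.subseg x y l μ ⟨h0, le_trans hml hl1⟩ ⟨hl.le, hl1⟩ hml hl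
    rw [hsub]
    have hmem : μ / l ∈ Set.Icc (0:ℝ) 1 := ⟨div_nonneg h0 hl.le, (div_le_one hl).2 hml⟩
    rw [H.dist_right x (H.W x y l) (μ/l) hmem, H.dist_left x y l ⟨hl.le, hl1⟩]
    field_simp

/-- an almost-retraction onto a ball. -/
theorem almost_retraction {X : Type*} [MetricSpace X] [CompleteSpace X]
    (H : HyperbolicW X) (z : X) (R ε : ℝ) (hR : 0 < R) (hε : 0 < ε) :
    ∃ π : X → X,
      (∀ x y : X, dist (π x) (π y) ≤ (1 + ε) * dist x y) ∧
      (∀ x ∈ Metric.ball z R, π x = z) ∧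
      (∀ x : X, x ∉ Metric.ball z (R * (1 + 1/ε)) → π x = x) ∧
      (∀ x : X, dist (π x) x ≤ R) := by
  set g : ℝ → ℝ := fun t => gfun R ε t with hgdef
  set π : X → X := fun x => H.W z x (g (dist x z) / dist x z) with hπ
  have hg0 : g 0 = 0 := gfun_ball le_rfl hR.le
  -- basic facts about the parameter
  have hmu_mem : ∀ x : X, g (dist x z) / dist x z ∈ Set.Icc (0:ℝ) 1 := by
    intro x
    rcases eq_or_lt_of_le (dist_nonneg : (0:ℝ) ≤ dist x z) with h | h
    · rw [← h, hg0]
      norm_num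
    · exact ⟨div_nonneg (gfun_nonneg hε dist_nonneg) dist_nonneg,
        (div_le_one h).2 gfun_le⟩
  have hdistz : ∀ x : X, dist z (π x) = g (dist x z) := by
    intro x
    rw [hπ]
    simp only
    rw [H.dist_left z x _ (hmu_mem x)]
    rcases eq_or_lt_of_le (dist_nonneg : (0:ℝ) ≤ dist x z) with h | h
    · rw [dist_comm z x, ← h, hg0, mul_zero]
    · rw [dist_comm z x, div_mul_cancel₀]
      exact (ne_of_gt h)
  have hdistx : ∀ x : X, dist (π x) x = dist x z - g (dist x z) := by
    intro x
    rw [hπ]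
    simp only
    rw [H.dist_right z x _ (hmu_mem x)]
    rcases eq_or_lt_of_le (dist_nonneg : (0:ℝ) ≤ dist x z) with h | h
    · rw [dist_comm z x, ← h, hg0]; ring
    · rw [dist_comm z x]
      field_simp
  -- Lipschitz key lemma (for dist x z ≤ dist y z)
  have key : ∀ x y : X, dist x z ≤ dist y z → dist (π x) (π y) ≤ (1 + ε) * dist x y := by
    intro x y hab
    have hd0 : (0:ℝ) ≤ dist x y := dist_nonneg
    have hba : dist y z - dist x z ≤ dist x y := by
      have h1 : |dist y z - dist x z| ≤ dist y x := abs_dist_sub_le y x z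
      have := le_abs_self (dist y z - dist x z)
      rw [dist_comm y x] at h1
      linarith
    rcases eq_or_lt_of_le (dist_nonneg : (0:ℝ) ≤ dist x z) with h0 | h0
    · -- x = z
      have hxz : x = z := dist_eq_zero.1 h0.symm
      have hπx : π x = z := by
        have h5 := hdistz x
        rw [← h0, hg0] at h5
        exact (dist_eq_zero.1 h5).symm
      rw [hπx]
      have h2 : dist z (π y) = g (dist y z) := hdistz y
      have h3 : dist x y = dist y z := by rw [hxz, dist_comm]
      have h4 : g (dist y z) ≤ dist y z := gfun_le
      rw [h2, h3]
      nlinarith [dist_nonneg (x := y) (y := z)]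
    · have hb0 : (0:ℝ) < dist y z := lt_of_lt_of_le h0 hab
      set a := dist x z with ha
      set b := dist y z with hb
      set d := dist x y with hd
      set μx := g a / a with hμx
      set μy := g b / b with hμy
      have hmono : μx ≤ μy := gfun_mono_div hR hε h0 hab
      have hμx_mem : μx ∈ Set.Icc (0:ℝ) 1 := hmu_mem x
      have hμy_mem : μy ∈ Set.Icc (0:ℝ) 1 := hmu_mem y
      have step1 : dist (π x) (H.W z y μx) ≤ μx * d := by
        rw [hπ]; exact H.hyp z x y μx hμx_mem
      have step2 : dist (H.W z y μx) (π y) = (μy - μx) * b := by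
        have hs := seg_dist H z y hμx_mem.1 hmono hμy_mem.2
        rw [dist_comm z y] at hs
        exact hs
      have htri := dist_triangle (π x) (H.W z y μx) (π y)
      rw [step2] at htri
      have hfin : μx * d + (μy - μx) * b ≤ (1 + ε) * d := by
        have hgb : g b ≤ g a + (1 + ε) * (b - a) := gfun_lip hε hab
        have hga0 : 0 ≤ g a := gfun_nonneg hε h0.le
        have hgale : g a ≤ a := gfun_le
        have hμyb : μy * b = g b := by
          rw [hμy]; field_simp
        have hμxa : μx * a = g a := by
          rw [hμx]; field_simp
        have hμx1 : μx ≤ 1 := hμx_mem.2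
        have hμx0 : 0 ≤ μx := hμx_mem.1
        have hexp : (μy - μx) * b = g b - μx * b := by
          rw [sub_mul, hμyb]
        rw [hexp]
        nlinarith [mul_le_mul_of_nonneg_left hba hμx0, mul_nonneg hμx0 (sub_nonneg.2 hba),
          mul_le_mul_of_nonneg_right hμx1 (sub_nonneg.2 hba)]
      linarith
  refine ⟨π, ?_, ?_, ?_, ?_⟩
  · intro x y
    rcases le_total (dist x z) (dist y z) with h | h
    · exact key x y h
    · rw [dist_comm (π x) (π y), dist_comm x y]
      exact key y x h
  · intro x hx
    rw [Metric.mem_ball] at hx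
    have hgx : g (dist x z) = 0 := gfun_ball dist_nonneg hx.le
    have h5 := hdistz x
    rw [hgx] at h5
    exact (dist_eq_zero.1 h5).symm
  · intro x hx
    rw [Metric.mem_ball, not_lt] at hx
    have hgx : g (dist x z) = dist x z := by
      show min (dist x z) ((1 + ε) * max 0 (dist x z - R)) = dist x z
      refine min_eq_left ?_
      have h2 : 0 ≤ dist x z - R := by
        have : R ≤ R * (1 + 1/ε) := by
          have : 0 < R * (1/ε) := mul_pos hR (by positivity)
          nlinarith
        linarith
      rw [max_eq_right h2]
      have h3 : ε * dist x z ≥ ε * (R * (1 + 1/ε)) :=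
        mul_le_mul_of_nonneg_left hx hε.le
      have hεne : ε ≠ 0 := hε.ne'
      have h5 : ε * (1 + 1/ε) = 1 + ε := by
        rw [mul_add, mul_one, mul_one_div, div_self hεne]; ring
      have h4 : ε * (R * (1 + 1/ε)) = R * (1 + ε) := by
        calc ε * (R * (1 + 1/ε)) = R * (ε * (1 + 1/ε)) := by ring
          _ = R * (1 + ε) := by rw [h5]
      nlinarith
    have h5 := hdistx x
    rw [hgx, sub_self] at h5
    exact dist_eq_zero.1 h5
  · intro x
    rw [hdistx x]
    have ha0 : (0:ℝ) ≤ dist x z := dist_nonneg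
    rcases le_total (dist x z) R with h | h
    · have : 0 ≤ g (dist x z) := gfun_nonneg hε ha0
      linarith
    · have hmax : max 0 (dist x z - R) = dist x z - R := max_eq_right (by linarith)
      have hge : dist x z - R ≤ g (dist x z) := by
        show dist x z - R ≤ min (dist x z) ((1 + ε) * max 0 (dist x z - R))
        rw [hmax]
        exact le_min (by linarith) (by nlinarith)
      linarith
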